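/- Tight spreading for system GS: if Φ ⊢ Γ |- t : S ⇒ (τ × S') with counters (b,m,d), the environment Γ is tight, and t is a neutral term, then τ is a tight constant. -/
import Mathlib


/-! The λcc-calculus with global state and the quantitative type system GS. -/

mutual
/-- Values: v ::= x | λx.t -/
inductive Val where
| var : String → Val
| lam : String → Tm → Val
/-- Terms: t ::= v | v t | get(l, x.t) | set(l, v, t) -/
inductive Tm where
| val : Val → Tm
| app : Val → Tm → Tm
| get : String → String → Tm → Tm
| set : String → Val → Tm → Tm
end

/-- States: s ::= ε | upd(l, v, s) -/
inductive St where
| nil : St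
| upd : String → Val → St → St

mutual
/-- Substitution of a value for a variable in a value. -/
def Val.subst : Val → String → Val → Val
| .var y, x, v => if y = x then v else .var y
| .lam y t, x, v => .lam y (if y = x then t else t.subst x v)
/-- Substitution of a value for a variable in a term. -/
def Tm.subst : Tm → String → Val → Tm
| .val w, x, v => .val (w.subst x v)
| .app w t, x, v => .app (w.subst x v) (t.subst x v)
| .get l y t, x, v => .get l y (if y = x then t else t.subst x v)
| .set l w t, x, v => .set l (w.subst x v) (t.subst x v)
end

/-- The equivalence ≡ on states generated by permutation of distinct locations. -/
inductive StEquiv : St → St → Prop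
| refl {s} : StEquiv s s
| symm {s q} : StEquiv s q → StEquiv q s
| trans {s q r} : StEquiv s q → StEquiv q r → StEquiv s r
| swap {l l' v w s} : l ≠ l' →
    StEquiv (.upd l v (.upd l' w s)) (.upd l' w (.upd l v s))
| cong {l v s q} : StEquiv s q → StEquiv (.upd l v s) (.upd l v q)

/-- Membership of a location in the domain of a state. -/
def St.inDom (l : String) : St → Prop
| .nil => False
| .upd l' _ s => l = l' ∨ St.inDom l s

/-- Labels of reduction steps: β-steps and get/set (memory) steps. -/
inductive Lbl where
| beta | getL | setL
deriving DecidableEq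

/-- Reduction on configurations. -/
inductive Step : Lbl → Tm × St → Tm × St → Prop
| beta {x t v s} : Step .beta (.app (.lam x t) (.val v), s) (t.subst x v, s)
| get {l v q x t s} : StEquiv s (.upd l v q) →
    Step .getL (.get l x t, s) (t.subst x v, s)
| set {l v t s} : Step .setL (.set l v t, s) (t, .upd l v s)
| appR {g t s u q v} : Step g (t, s) (u, q) → Step g (.app v t, s) (.app v u, q)

/-- Blocked configurations. -/
inductive Blocked : Tm × St → Prop
| get {l x u s} : ¬ St.inDom l s → Blocked (.get l x u, s)
| app {v u s} : Blocked (u, s) → Blocked (.app v u, s)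

mutual
/-- Neutral terms: ne ::= x no | (λx.t) ne -/
inductive Ne' : Tm → Prop
| varApp {x u} : No' u → Ne' (.app (.var x) u)
| lamApp {x t u} : Ne' u → Ne' (.app (.lam x t) u)
/-- Normal terms: no ::= v | ne -/
inductive No' : Tm → Prop
| val {v} : No' (.val v)
| ne {t} : Ne' t → No' t
end

/-- A configuration is final if it is blocked or its term is normal. -/
def Final (c : Tm × St) : Prop := Blocked c ∨ No' c.1

/-- Size of a term (values have size 0). -/
def Tm.size : Tm → ℕ
| .val _ => 0
| .app _ t => 1 + t.size
| .get _ _ t => t.size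
| .set _ _ t => t.size

mutual
/-- Free variables of a value. -/
def Val.fv : Val → Set String
| .var x => {x}
| .lam x t => t.fv \ {x}
/-- Free variables of a term. -/
def Tm.fv : Tm → Set String
| .val v => v.fv
| .app v t => v.fv ∪ t.fv
| .get _ x t => t.fv \ {x}
| .set _ v t => v.fv ∪ t.fv
end

/-- Free variables of a state. -/
def St.fv : St → Set String
| .nil => ∅
| .upd _ v s => v.fv ∪ s.fv

/-- Value types σ ::= vr | vl | M | M → (S ⇒ (τ × S')).
Multi-types are lists (standing for multisets) of value types; state types are
association lists from locations to multi-types; a type τ is `Option VTy`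
with `none` standing for the tight constant n of neutral terms. -/
inductive VTy where
| vr : VTy
| vl : VTy
| mult : List VTy → VTy
| arr : List VTy → List (String × List VTy) → Option VTy → List (String × List VTy) → VTy

/-- Multi-types. -/
abbrev MTy := List VTy
/-- State types: partial maps from locations to multi-types. -/
abbrev STy := List (String × MTy)
/-- Types: τ ::= n | σ, with `none` representing n. -/
abbrev Ty := Option VTy

/-- Types assignable to terms: value types or monadic types S ⇒ (τ × S'). -/
inductive GTy where
| ofV : VTy → GTy
| mon : STy → Ty → STy → GTy

/-- Typing environments. -/
abbrev Env := String → MTy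
def Env.empty : Env := fun _ => []
def Env.add (Γ Δ : Env) : Env := fun x => Γ x ++ Δ x
def Env.single (x : String) (σ : VTy) : Env := fun y => if y = x then [σ] else []
def Env.erase (Γ : Env) (x : String) : Env := fun y => if y = x then [] else Γ y
def Env.update (Γ : Env) (x : String) (M : MTy) : Env := fun y => if y = x then M else Γ y

/-- Lookup in a state type. -/
def STy.find : STy → String → Option MTy
| [], _ => none
| (l', M) :: S, l => if l = l' then some M else STy.find S l

/-- Union ⊎ of state types (pointwise multiset union where both are defined). -/
def STy.union (S S' : STy) : STy :=
  (S.map fun p => (p.1, p.2 ++ ((STy.find S' p.1).getD []))) ++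
  S'.filter fun p => (STy.find S p.1).isNone

/-- Tight value types: the tight constants vr and vl. -/
def tightV (σ : VTy) : Prop := σ = .vr ∨ σ = .vl
/-- Tight types: the tight constants vr, vl and n. -/
def tightTy : Ty → Prop
| none => True
| some σ => tightV σ
def tightMul (M : MTy) : Prop := ∀ σ ∈ M, tightV σ
def tightEnv (Γ : Env) : Prop := ∀ x, tightMul (Γ x)
def tightSTy (S : STy) : Prop := ∀ p ∈ S, tightMul p.2

/-- Liftable value types: μ ::= vr | vl | M. -/
def LiftV (σ : VTy) : Prop := σ = .vr ∨ σ = .vl ∨ ∃ M, σ = .mult M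

/-- The typing judgement for terms of system GS, with counters (b, m, d). -/
inductive TJ : Env → Tm → GTy → ℕ → ℕ → ℕ → Prop
| ax {x σ} : TJ (Env.single x σ) (.val (.var x)) (.ofV σ) 0 0 0
| lift {Γ v σ b m d} (S : STy) : TJ Γ (.val v) (.ofV σ) b m d → LiftV σ →
    TJ Γ (.val v) (.mon S (some σ) S) b m d
| lam {Γ t S τ S' b m d x} : TJ Γ t (.mon S τ S') b m d →
    TJ (Env.erase Γ x) (.val (.lam x t)) (.ofV (.arr (Γ x) S τ S')) b m d
| manyNil {v} : TJ Env.empty (.val v) (.ofV (.mult [])) 0 0 0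
| manyCons {Γ Δ v σ M b m d b' m' d'} :
    TJ Γ (.val v) (.ofV σ) b m d →
    TJ Δ (.val v) (.ofV (.mult M)) b' m' d' →
    TJ (Env.add Γ Δ) (.val v) (.ofV (.mult (σ :: M))) (b + b') (m + m') (d + d')
| app {Γ Δ v t M S S' τ S'' b m d b' m' d'} :
    TJ Γ (.val v) (.ofV (.arr M S' τ S'')) b m d →
    TJ Δ t (.mon S (some (.mult M)) S') b' m' d' →
    TJ (Env.add Γ Δ) (.app v t) (.mon S τ S'') (1 + b + b') (m + m') (d + d')
| get {Γ t S τ S' b m d l x} : TJ Γ t (.mon S τ S') b m d →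
    TJ (Env.erase Γ x) (.get l x t) (.mon (STy.union [(l, Γ x)] S) τ S') b (1 + m) d
| set {Γ Δ v t l M S τ S' b m d b' m' d'} :
    TJ Γ (.val v) (.ofV (.mult M)) b m d →
    TJ Δ t (.mon ((l, M) :: S) τ S') b' m' d' →
    STy.find S l = none →
    TJ (Env.add Γ Δ) (.set l v t) (.mon S τ S') (b + b') (1 + m + m') (d + d')
| lamP {x t} : TJ Env.empty (.val (.lam x t)) (.ofV .vl) 0 0 0
| appP1 {Γ t S τ S' b m d x} : TJ Γ t (.mon S τ S') b m d → tightTy τ →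
    TJ (Env.add (Env.single x .vr) Γ) (.app (.var x) t) (.mon S none S') b m (1 + d)
| appP2 {Γ u S S' b m d x t} : TJ Γ u (.mon S none S') b m d →
    TJ Γ (.app (.lam x t) u) (.mon S none S') b m (1 + d)

/-- The typing judgement for states. -/
inductive SJ : Env → St → STy → ℕ → ℕ → ℕ → Prop
| emp : SJ Env.empty .nil [] 0 0 0
| upd {Γ Δ v s l M S b m d b' m' d'} :
    TJ Γ (.val v) (.ofV (.mult M)) b m d →
    SJ Δ s S b' m' d' → STy.find S l = none →
    SJ (Env.add Γ Δ) (.upd l v s) ((l, M) :: S) (b + b') (m + m') (d + d')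

/-- Configuration types κ = (τ × S). -/
abbrev ConfTy := Ty × STy

/-- The typing judgement for configurations. -/
inductive CJ : Env → Tm × St → ConfTy → ℕ → ℕ → ℕ → Prop
| conf {Γ Δ t s S τ S' b m d b' m' d'} :
    TJ Γ t (.mon S τ S') b m d → SJ Δ s S b' m' d' →
    CJ (Env.add Γ Δ) (t, s) (τ, S') (b + b') (m + m') (d + d')

def tightConf (κ : ConfTy) : Prop := tightTy κ.1 ∧ tightSTy κ.2

/-- Multi-step reduction counting β-steps and get/set-steps separately. -/
inductive Steps : Tm × St → ℕ → ℕ → Tm × St → Prop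
| refl {c} : Steps c 0 0 c
| beta {c c' c'' b m} : Step .beta c c' → Steps c' b m c'' → Steps c (b + 1) m c''
| mem {g c c' c'' b m} : Step g c c' → g ≠ .beta → Steps c' b m c'' → Steps c b (m + 1) c''

lemma tightEnv_add {Γ Δ : Env} (h : tightEnv (Env.add Γ Δ)) :
    tightEnv Γ ∧ tightEnv Δ := by
  constructor <;> intro x σ hσ <;>
    exact h x σ (by simp [Env.add, List.mem_append]; tauto)

lemma var_arr {Γ : Env} {x M S τ S' b m d}
    (h : TJ Γ (.val (.var x)) (.ofV (.arr M S τ S')) b m d)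
    (hΓ : tightEnv Γ) : False := by
  cases h
  rcases hΓ x (VTy.arr M S τ S') (by simp [Env.single]) with h | h <;> cases h

lemma tight_spreading_aux {Γ : Env} {t : Tm} {g : GTy} {b m d : ℕ}
    (h : TJ Γ t g b m d) : tightEnv Γ → Ne' t →
    ∀ {S : STy} {τ : Ty} {S' : STy}, g = .mon S τ S' → tightTy τ := by
  induction h with
  | ax => intro _ ht; cases ht
  | lift _ _ _ => intro _ ht; cases ht
  | lam _ => intro _ ht; cases ht
  | manyNil => intro _ ht; cases ht
  | manyCons _ _ => intro _ ht; cases ht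
  | app h1 h2 _ ih2 =>
    intro hΓ ht S τ S' hg
    injection hg with h₁ h₂ h₃
    subst h₂
    cases ht with
    | varApp hu => exact (var_arr h1 (tightEnv_add hΓ).1).elim
    | lamApp hu =>
      have := ih2 (tightEnv_add hΓ).2 hu rfl
      rcases this with h | h <;> cases h
  | get _ _ => intro _ ht; cases ht
  | set _ _ _ _ _ => intro _ ht; cases ht
  | lamP => intro _ ht; cases ht
  | appP1 _ _ _ =>
    intro _ _ S τ S' hg
    injection hg with h₁ h₂ h₃
    subst h₂; trivial
  | appP2 _ _ =>
    intro _ _ S τ S' hg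
    injection hg with h₁ h₂ h₃
    subst h₂; trivial

/-- tight spreading: a neutral term typed under a tight
environment receives a tight constant. -/
theorem tight_spreading {Γ : Env} {t : Tm} {S : STy} {τ : Ty} {S' : STy} {b m d : ℕ}
    (h : TJ Γ t (.mon S τ S') b m d) (hΓ : tightEnv Γ) (ht : Ne' t) :
    tightTy τ := tight_spreading_aux h hΓ ht rfl
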